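/- arXiv:2603.01430 — 2 statements merged into one kernel-verified Lean document; each statement's English description precedes it below -/
import Mathlib

section
/- Let f : ℝ^n × ℝ^m → ℝ be twice continuously differentiable, let τ > 0, and let z* = (x*, y*) be a local saddle point of f. Then every eigenvalue κ ∈ ℂ of the real (n+m)×(n+m) matrix Λ_τ H(z*) satisfies Re(κ) ≤ 0. -/
open Matrix MeasureTheory Filter

noncomputable section

abbrev Idx (n m : ℕ) := Fin n ⊕ Fin m
abbrev Emm (n m : ℕ) := EuclideanSpace ℝ (Idx n m)

def toE {n m : ℕ} (v : Idx n m → ℝ) : Emm n m := WithLp.toLp 2 v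
def ofE {n m : ℕ} (v : Emm n m) : Idx n m → ℝ := v

def splice {n m : ℕ} (a b : Emm n m) : Emm n m :=
  toE (Sum.elim (fun i => a (Sum.inl i)) (fun j => b (Sum.inr j)))

def IsLocalSaddle {n m : ℕ} (f : Emm n m → ℝ) (zs : Emm n m) : Prop :=
  ∃ U ∈ nhds zs, ∀ w ∈ U, f (splice zs w) ≤ f zs ∧ f zs ≤ f (splice w zs)

def Fvec {n m : ℕ} (f : Emm n m → ℝ) (z : Emm n m) : Emm n m :=
  toE (Sum.elim (fun i => gradient f z (Sum.inl i)) (fun j => -(gradient f z (Sum.inr j))))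

def hessMat {n m : ℕ} (f : Emm n m → ℝ) (z : Emm n m) : Matrix (Idx n m) (Idx n m) ℝ :=
  Matrix.of fun i j => fderiv ℝ (fun w => gradient f w i) z (EuclideanSpace.single j 1)

def Hmat {n m : ℕ} (f : Emm n m → ℝ) (z : Emm n m) : Matrix (Idx n m) (Idx n m) ℝ :=
  Matrix.diagonal (Sum.elim (fun _ => (-1 : ℝ)) (fun _ => 1)) * hessMat f z

def Lam (n m : ℕ) (τ : ℝ) : Matrix (Idx n m) (Idx n m) ℝ :=
  Matrix.diagonal (Sum.elim (fun _ => 1 / τ) (fun _ => (1 : ℝ)))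

def DFmat {n m : ℕ} (f : Emm n m → ℝ) (z : Emm n m) : Matrix (Idx n m) (Idx n m) ℝ :=
  Matrix.of fun i j => fderiv ℝ (fun w => Fvec f w i) z (EuclideanSpace.single j 1)

def D2Fmat {n m : ℕ} (f : Emm n m → ℝ) (z v : Emm n m) : Matrix (Idx n m) (Idx n m) ℝ :=
  Matrix.of fun i j => fderiv ℝ (fun w => DFmat f w i j) z v

def IsEigen {n m : ℕ} (A : Matrix (Idx n m) (Idx n m) ℝ) (κ : ℂ) : Prop :=
  ∃ v : Idx n m → ℂ, v ≠ 0 ∧ A.map (fun x : ℝ => (x : ℂ)) *ᵥ v = κ • v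

def AssumptionA {n m : ℕ} (f : Emm n m → ℝ) (L : ℝ) : Prop :=
  (∀ zs, IsLocalSaddle f zs → IsUnit (hessMat f zs)) ∧
    LipschitzWith L.toNNReal (fun z => gradient f z)

def AssumptionB {n m : ℕ} (f : Emm n m → ℝ) (L : ℝ) : Prop :=
  (∀ z, IsUnit (hessMat f z)) ∧ LipschitzWith L.toNNReal (fun z => gradient f z)

def IsSolOn {n m : ℕ} (W : Emm n m → Emm n m) (Z : ℝ → Emm n m) : Prop :=
  ∀ t ∈ Set.Ici (0 : ℝ), HasDerivWithinAt Z (W (Z t)) (Set.Ici 0) t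

def IsLocExpStableEquilib {n m : ℕ} (W : Emm n m → Emm n m) (ze : Emm n m) : Prop :=
  W ze = 0 ∧ ∃ δ M lam : ℝ, 0 < δ ∧ 0 < M ∧ 0 < lam ∧
    ∀ Z : ℝ → Emm n m, IsSolOn W Z → ‖Z 0 - ze‖ < δ →
      ∀ t ≥ (0:ℝ), ‖Z t - ze‖ ≤ M * Real.exp (-lam * t) * ‖Z 0 - ze‖

def IsLocExpStableFixed {n m : ℕ} (w : Emm n m → Emm n m) (ze : Emm n m) : Prop :=
  w ze = ze ∧ ∃ δ M γ : ℝ, 0 < δ ∧ 0 < M ∧ 0 < γ ∧ γ < 1 ∧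
    ∀ z0 : Emm n m, ‖z0 - ze‖ < δ → ∀ k : ℕ, ‖w^[k] z0 - ze‖ ≤ M * γ ^ k * ‖z0 - ze‖

def StableFixed {n m : ℕ} (w : Emm n m → Emm n m) (ze : Emm n m) : Prop :=
  ∀ ε > 0, ∃ δ > 0, ∀ z0 : Emm n m, ‖z0 - ze‖ < δ → ∀ k : ℕ, ‖w^[k] z0 - ze‖ < ε

def UnstableFixed {n m : ℕ} (w : Emm n m → Emm n m) (ze : Emm n m) : Prop :=
  w ze = ze ∧ ¬ StableFixed w ze

def ConvergesToUnstable {n m : ℕ} (w : Emm n m → Emm n m) (z0 : Emm n m) : Prop :=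
  ∃ ze : Emm n m, UnstableFixed w ze ∧ Tendsto (fun k => w^[k] z0) atTop (nhds ze)

/-! Write `J = diag(-I, I)` and `Q = Λ_τ⁻¹ = diag(τ I, I)`, so that `Q Λ_τ H = J ∇²f`. For an
eigenvector `v` of `Λ_τ H(z*)` with eigenvalue `κ`, pairing `Q Λ_τ H v = κ Q v` with `v̄` gives
`κ v̄ᵀ Q v = v̄ᵀ J ∇²f v`. Here `v̄ᵀ Q v > 0`, and the real part of the right-hand side is the sum
of the real quadratic forms of `J ∇²f` at `Re v` and `Im v`. By symmetry of the Hessian the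
off-diagonal blocks cancel in `uᵀ J ∇²f u`, leaving `u_yᵀ ∇²_yy f u_y - u_xᵀ ∇²_xx f u_x ≤ 0`
by the second-order necessary conditions at the local saddle point. -/

namespace Matrix

variable {ι : Type*} [Fintype ι]

theorem IsSymm.dotProduct_mulVec_comm {R : Type*} [CommSemiring R] {A : Matrix ι ι R}
    (hA : A.IsSymm) (x y : ι → R) : x ⬝ᵥ A *ᵥ y = y ⬝ᵥ A *ᵥ x := by
  rw [dotProduct_mulVec, ← mulVec_transpose, hA.eq, dotProduct_comm]

theorem star_dotProduct_map_ofReal_mulVec (M : Matrix ι ι ℝ) (v : ι → ℂ) :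
    star v ⬝ᵥ M.map Complex.ofReal *ᵥ v =
      ⟨(fun i => (v i).re) ⬝ᵥ M *ᵥ (fun i => (v i).re) +
          (fun i => (v i).im) ⬝ᵥ M *ᵥ (fun i => (v i).im),
        (fun i => (v i).re) ⬝ᵥ M *ᵥ (fun i => (v i).im) -
          (fun i => (v i).im) ⬝ᵥ M *ᵥ (fun i => (v i).re)⟩ := by
  apply Complex.ext <;>
  simp [dotProduct, mulVec, Complex.re_sum, Complex.im_sum, Finset.mul_sum,
    Finset.sum_add_distrib, sub_eq_add_neg]

open ComplexOrder in
theorem PosDef.map_ofReal {Q : Matrix ι ι ℝ} (hQ : Q.PosDef) :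
    (Q.map Complex.ofReal).PosDef := by
  refine .of_dotProduct_mulVec_pos (hQ.1.map _ fun x => (Complex.conj_ofReal x).symm)
    fun v hv => ?_
  have hsymm : Q.IsSymm := isHermitian_iff_isSymm.1 hQ.1
  set a : ι → ℝ := fun i => (v i).re
  set b : ι → ℝ := fun i => (v i).im
  have hab : a ≠ 0 ∨ b ≠ 0 := by
    by_contra! h
    exact hv (funext fun i => Complex.ext (congrFun h.1 i) (congrFun h.2 i))
  rw [star_dotProduct_map_ofReal_mulVec, Complex.lt_def]
  refine ⟨?_, (sub_eq_zero.2 (hsymm.dotProduct_mulVec_comm a b)).symm⟩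
  rcases hab with ha | hb
  · exact add_pos_of_pos_of_nonneg (hQ.dotProduct_mulVec_pos ha)
      (hQ.posSemidef.dotProduct_mulVec_nonneg b)
  · exact add_pos_of_nonneg_of_pos (hQ.posSemidef.dotProduct_mulVec_nonneg a)
      (hQ.dotProduct_mulVec_pos hb)

open ComplexOrder in
theorem re_le_zero_of_mulVec_eq_smul {Q A : Matrix ι ι ℝ} (hQ : Q.PosDef)
    (hQA : ∀ u, u ⬝ᵥ (Q * A) *ᵥ u ≤ 0) {κ : ℂ} {v : ι → ℂ} (hv : v ≠ 0)
    (hAv : A.map Complex.ofReal *ᵥ v = κ • v) : κ.re ≤ 0 := by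
  obtain ⟨hc_re, hc_im⟩ := Complex.pos_iff.1 (hQ.map_ofReal.dotProduct_mulVec_pos hv)
  have hκc : star v ⬝ᵥ (Q * A).map Complex.ofReal *ᵥ v
      = κ * (star v ⬝ᵥ Q.map Complex.ofReal *ᵥ v) := by
    rw [show (Q * A).map Complex.ofReal = Q.map Complex.ofReal * A.map Complex.ofReal from
        Matrix.map_mul (f := Complex.ofRealHom), ← mulVec_mulVec, hAv, mulVec_smul,
      dotProduct_smul, smul_eq_mul]
  have hre := congrArg Complex.re hκc
  rw [Complex.mul_re, ← hc_im, mul_zero, sub_zero, star_dotProduct_map_ofReal_mulVec] at hre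
  exact nonpos_of_mul_nonpos_left (hre ▸ add_nonpos (hQA _) (hQA _)) hc_re

variable {α β R : Type*} [Fintype α] [Fintype β]

theorem sumElim_zero_dotProduct_mulVec [CommSemiring R] (S : Matrix (α ⊕ β) (α ⊕ β) R)
    (x : α → R) : Sum.elim x 0 ⬝ᵥ S *ᵥ Sum.elim x 0 = x ⬝ᵥ S.toBlocks₁₁ *ᵥ x := by
  rw [← S.fromBlocks_toBlocks, fromBlocks_mulVec, sumElim_dotProduct_sumElim]
  simp

theorem zero_sumElim_dotProduct_mulVec [CommSemiring R] (S : Matrix (α ⊕ β) (α ⊕ β) R)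
    (y : β → R) : Sum.elim 0 y ⬝ᵥ S *ᵥ Sum.elim 0 y = y ⬝ᵥ S.toBlocks₂₂ *ᵥ y := by
  rw [← S.fromBlocks_toBlocks, fromBlocks_mulVec, sumElim_dotProduct_sumElim]
  simp

theorem IsSymm.dotProduct_diagonal_neg_one_one_mul_mulVec_nonpos [DecidableEq α] [DecidableEq β]
    [CommRing R] [PartialOrder R] [IsOrderedRing R] {S : Matrix (α ⊕ β) (α ⊕ β) R}
    (hS : S.IsSymm) (h₁₁ : ∀ x, 0 ≤ x ⬝ᵥ S.toBlocks₁₁ *ᵥ x)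
    (h₂₂ : ∀ y, y ⬝ᵥ S.toBlocks₂₂ *ᵥ y ≤ 0) (u : α ⊕ β → R) :
    u ⬝ᵥ (diagonal (Sum.elim (fun _ => -1) fun _ => 1) * S) *ᵥ u ≤ 0 := by
  obtain ⟨-, hBC, -, -⟩ := isSymm_fromBlocks_iff.1 (S.fromBlocks_toBlocks.symm ▸ hS)
  have hneg : (diagonal fun _ : α => (-1 : R)) = -1 := by
    rw [← diagonal_one, diagonal_neg]
  have hcross : ∀ x y, y ⬝ᵥ S.toBlocks₁₂ᵀ *ᵥ x = x ⬝ᵥ S.toBlocks₁₂ *ᵥ y := fun x y => by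
    rw [dotProduct_mulVec, vecMul_transpose, dotProduct_comm]
  rw [← Sum.elim_comp_inl_inr u, ← S.fromBlocks_toBlocks, ← hBC, ← fromBlocks_diagonal,
    fromBlocks_multiply, fromBlocks_mulVec, sumElim_dotProduct_sumElim]
  simpa [hneg, hcross, neg_mulVec] using (h₂₂ _).trans (h₁₁ _)

end Matrix

section SecondOrder

open Topology

theorem IsLocalMin.deriv_deriv_nonneg {g : ℝ → ℝ} {x₀ : ℝ} (h : IsLocalMin g x₀)
    (hc : ContinuousAt g x₀) : 0 ≤ deriv (deriv g) x₀ := by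
  by_contra! hneg
  -- the second-derivative test would make `x₀` a local maximum as well, so `g` is locally constant
  have hconst : g =ᶠ[𝓝 x₀] fun _ => g x₀ :=
    (h.and (isLocalMax_of_deriv_deriv_neg hneg h.deriv_eq_zero hc)).mono
      fun x hx => le_antisymm hx.2 hx.1
  simp [hconst.deriv.deriv_eq] at hneg

theorem IsLocalMax.deriv_deriv_nonpos {g : ℝ → ℝ} {x₀ : ℝ} (h : IsLocalMax g x₀)
    (hc : ContinuousAt g x₀) : deriv (deriv g) x₀ ≤ 0 := by
  simpa [deriv.neg'] using h.neg.deriv_deriv_nonneg hc.neg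

variable {E F : Type*} [NormedAddCommGroup E] [NormedSpace ℝ E] [NormedAddCommGroup F]
  [NormedSpace ℝ F]

theorem DifferentiableAt.hasDerivAt_comp_line {g : E → F} {z u : E} {t : ℝ}
    (hg : DifferentiableAt ℝ g (z + t • u)) :
    HasDerivAt (fun s : ℝ => g (z + s • u)) (fderiv ℝ g (z + t • u) u) t := by
  simpa [Function.comp_def] using
    hg.hasFDerivAt.comp_hasDerivAt t (((hasDerivAt_id t).smul_const u).const_add z)

theorem ContDiff.deriv_deriv_comp_line {f : E → ℝ} (hf : ContDiff ℝ 2 f) (z u : E) :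
    deriv (deriv fun t : ℝ => f (z + t • u)) 0 = fderiv ℝ (fderiv ℝ f) z u u := by
  have hf' : ContDiff ℝ 1 (fderiv ℝ f) := hf.fderiv_right le_rfl
  have hderiv : deriv (fun t : ℝ => f (z + t • u)) = fun t => fderiv ℝ f (z + t • u) u :=
    funext fun t => ((hf.differentiable two_ne_zero _).hasDerivAt_comp_line).deriv
  rw [hderiv]
  simpa using ((hf'.differentiable one_ne_zero _).hasDerivAt_comp_line (t := 0)
    (z := z) (u := u)).clm_apply (hasDerivAt_const 0 u) |>.deriv

end SecondOrder

section Hessian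

variable {n m : ℕ}

theorem gradient_apply (f : Emm n m → ℝ) (w : Emm n m) (i : Idx n m) :
    gradient f w i = fderiv ℝ f w (EuclideanSpace.single i 1) := by
  rw [← inner_gradient_left, EuclideanSpace.inner_single_right]
  simp

theorem hessMat_apply {f : Emm n m → ℝ} (hf : ContDiff ℝ 2 f) (z : Emm n m) (i j : Idx n m) :
    hessMat f z i j =
      fderiv ℝ (fderiv ℝ f) z (EuclideanSpace.single j 1) (EuclideanSpace.single i 1) := by
  simp only [hessMat, of_apply, gradient_apply]
  rw [fderiv_clm_apply ((hf.fderiv_right le_rfl).differentiable one_ne_zero z)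
    (differentiableAt_const _)]
  simp

theorem hessMat_isSymm {f : Emm n m → ℝ} (hf : ContDiff ℝ 2 f) (z : Emm n m) :
    (hessMat f z).IsSymm := by
  ext i j
  rw [transpose_apply, hessMat_apply hf, hessMat_apply hf]
  exact hf.contDiffAt.isSymmSndFDerivAt (by simp) _ _

theorem dotProduct_hessMat_mulVec {f : Emm n m → ℝ} (hf : ContDiff ℝ 2 f) (z u : Emm n m) :
    ofE u ⬝ᵥ hessMat f z *ᵥ ofE u = fderiv ℝ (fderiv ℝ f) z u u := by
  have hu : u = ∑ j, u j • EuclideanSpace.single j 1 := by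
    simpa using ((EuclideanSpace.basisFun _ ℝ).sum_repr u).symm
  conv_rhs => rw [hu]
  simp only [map_sum, map_smul, _root_.sum_apply, _root_.smul_apply, smul_eq_mul,
    Finset.mul_sum, hessMat_apply hf, ofE, dotProduct, mulVec]
  exact Finset.sum_congr rfl fun i _ => Finset.sum_congr rfl fun j _ => by ring

end Hessian

section Saddle

open Topology

variable {n m : ℕ} {f : Emm n m → ℝ} {zs : Emm n m}

theorem splice_eq_left {a b : Emm n m} (h : ∀ j, a (Sum.inr j) = b (Sum.inr j)) :
    splice a b = a := by
  ext (i | j) <;> simp [splice, toE, h]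

theorem splice_eq_right {a b : Emm n m} (h : ∀ i, a (Sum.inl i) = b (Sum.inl i)) :
    splice a b = b := by
  ext (i | j) <;> simp [splice, toE, h]

theorem IsLocalSaddle.isLocalMin_comp_line (hzs : IsLocalSaddle f zs) {u : Emm n m}
    (hu : ∀ j, u (Sum.inr j) = 0) : IsLocalMin (fun t : ℝ => f (zs + t • u)) 0 := by
  obtain ⟨U, hU, hsaddle⟩ := hzs
  have hline : ∀ᶠ t : ℝ in 𝓝 0, zs + t • u ∈ U :=
    (Continuous.tendsto' (by fun_prop) 0 zs (by simp)) hU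
  filter_upwards [hline] with t ht
  simpa [splice_eq_left (a := zs + t • u) (b := zs) (by simp [hu])] using (hsaddle _ ht).2

theorem IsLocalSaddle.isLocalMax_comp_line (hzs : IsLocalSaddle f zs) {u : Emm n m}
    (hu : ∀ i, u (Sum.inl i) = 0) : IsLocalMax (fun t : ℝ => f (zs + t • u)) 0 := by
  obtain ⟨U, hU, hsaddle⟩ := hzs
  have hline : ∀ᶠ t : ℝ in 𝓝 0, zs + t • u ∈ U :=
    (Continuous.tendsto' (by fun_prop) 0 zs (by simp)) hU
  filter_upwards [hline] with t ht
  simpa [splice_eq_right (a := zs) (b := zs + t • u) (by simp [hu])] using (hsaddle _ ht).1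

theorem IsLocalSaddle.dotProduct_hessMat_toBlocks₁₁_mulVec_nonneg (hf : ContDiff ℝ 2 f)
    (hzs : IsLocalSaddle f zs) (x : Fin n → ℝ) :
    0 ≤ x ⬝ᵥ (hessMat f zs).toBlocks₁₁ *ᵥ x := by
  have hmin := hzs.isLocalMin_comp_line (u := toE (Sum.elim x 0)) fun _ => rfl
  have := hmin.deriv_deriv_nonneg (hf.continuous.comp (by fun_prop)).continuousAt
  rwa [hf.deriv_deriv_comp_line, ← dotProduct_hessMat_mulVec hf, ofE, toE,
    sumElim_zero_dotProduct_mulVec] at this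

theorem IsLocalSaddle.dotProduct_hessMat_toBlocks₂₂_mulVec_nonpos (hf : ContDiff ℝ 2 f)
    (hzs : IsLocalSaddle f zs) (y : Fin m → ℝ) :
    y ⬝ᵥ (hessMat f zs).toBlocks₂₂ *ᵥ y ≤ 0 := by
  have hmax := hzs.isLocalMax_comp_line (u := toE (Sum.elim 0 y)) fun _ => rfl
  have := hmax.deriv_deriv_nonpos (hf.continuous.comp (by fun_prop)).continuousAt
  rwa [hf.deriv_deriv_comp_line, ← dotProduct_hessMat_mulVec hf, ofE, toE,
    zero_sumElim_dotProduct_mulVec] at this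

end Saddle

/-- If `zs` is a local saddle point of the `C²` function `f`, then every
eigenvalue `κ` of `Λ_τ H(zs)` satisfies `Re κ ≤ 0`. -/
theorem stmt2 {n m : ℕ} (f : Emm n m → ℝ) (τ : ℝ)
    (hf : ContDiff ℝ 2 f) (hτ : 0 < τ)
    (zs : Emm n m) (hzs : IsLocalSaddle f zs) :
    ∀ κ : ℂ, IsEigen (Lam n m τ * Hmat f zs) κ → κ.re ≤ 0 := by
  rintro κ ⟨v, hv, hκ⟩
  set Q : Matrix (Idx n m) (Idx n m) ℝ := diagonal (Sum.elim (fun _ => τ) fun _ => 1)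
  have hQ : Q.PosDef := posDef_diagonal_iff.2 fun i => by cases i <;> simp [hτ]
  have hQLam : Q * Lam n m τ = 1 := by
    rw [Lam, diagonal_mul_diagonal, ← diagonal_one]
    congr 1
    ext (i | j) <;> simp [hτ.ne']
  refine re_le_zero_of_mulVec_eq_smul hQ (fun u => ?_) hv hκ
  rw [← Matrix.mul_assoc, hQLam, Matrix.one_mul]
  exact (hessMat_isSymm hf zs).dotProduct_diagonal_neg_one_one_mul_mulVec_nonpos
    (hzs.dotProduct_hessMat_toBlocks₁₁_mulVec_nonneg hf)
    (hzs.dotProduct_hessMat_toBlocks₂₂_mulVec_nonpos hf) u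
end
end

section
/- Let f : ℝ^n × ℝ^m → ℝ be three times continuously differentiable and satisfy Assumption B, and let z* be a local saddle point of f. Then: (i) z* is a locally exponentially stable equilibrium of the O(1)-resolution ODE of the Damped Newton method, ż = −(∇F(z))^{-1} F(z); and (ii) for every s > 0, z* is a locally exponentially stable equilibrium of the O(s)-resolution ODE of the Damped Newton method, ż = −(∇F(z))^{-1}F(z) + (s/2)·( (∇F(z))^{-1} ∇²F(z)[(∇F(z))^{-1}F(z)] − I ) (∇F(z))^{-1} F(z). -/
open Matrix MeasureTheory Filter

noncomputable section

/-! Write `F = Fvec f`. If `⟪F z, DF(z) W(z)⟫ ≤ -‖F z‖²` near `z*`, then along a solution of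
`ż = W(z)` that stays near `z*` the quantity `‖F(z(t))‖` decays like `e^{-t}`. At a saddle point
`F z* = 0`, and `DF z*` is invertible, so near `z*` the norm `‖F z‖` is comparable to `‖z - z*‖`:
a trapping argument keeps solutions started close to `z*` in that neighbourhood, and the decay of
`‖F‖` becomes exponential stability.

For the `O(1)` field `W = -N`, `N = DF⁻¹ F`, one has `DF · W = -F` exactly. For the `O(s)` field,
`DF · W = -F + (s/2) (D²F[N, N] - F)`, and `D²F[N, N] = O(‖F‖²)` is dominated by `‖F‖` near `z*`. -/

open Set Asymptotics Metric Topology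
open scoped RealInnerProductSpace

section Lyapunov

variable {G : Type*} [NormedAddCommGroup G] [InnerProductSpace ℝ G]

theorem norm_le_norm_zero_of_inner_deriv_nonpos {h h' : ℝ → G} {T : ℝ} (hT : 0 ≤ T)
    (hcont : ContinuousOn h (Icc 0 T)) (hderiv : ∀ t ∈ Ioo 0 T, HasDerivAt h (h' t) t)
    (hinner : ∀ t ∈ Ioo 0 T, ⟪h t, h' t⟫ ≤ 0) : ‖h T‖ ≤ ‖h 0‖ := by
  have hanti : AntitoneOn (fun t => ‖h t‖ ^ 2) (Icc 0 T) := by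
    refine antitoneOn_of_hasDerivWithinAt_nonpos (f' := fun t => 2 * ⟪h t, h' t⟫)
      (convex_Icc 0 T) (hcont.norm.pow 2) (fun t ht => ?_) (fun t ht => ?_) <;>
      rw [interior_Icc] at ht
    · exact (hderiv t ht).norm_sq.hasDerivWithinAt
    · linarith [hinner t ht]
  exact (pow_le_pow_iff_left₀ (norm_nonneg _) (norm_nonneg _) two_ne_zero).1
    (hanti (left_mem_Icc.2 hT) (right_mem_Icc.2 hT) hT)

theorem norm_le_exp_neg_mul_of_inner_deriv_le {g g' : ℝ → G} {T : ℝ} (hT : 0 ≤ T)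
    (hcont : ContinuousOn g (Icc 0 T)) (hderiv : ∀ t ∈ Ioo 0 T, HasDerivAt g (g' t) t)
    (hinner : ∀ t ∈ Ioo 0 T, ⟪g t, g' t⟫ ≤ -‖g t‖ ^ 2) :
    ‖g T‖ ≤ Real.exp (-T) * ‖g 0‖ := by
  have key := norm_le_norm_zero_of_inner_deriv_nonpos (h := fun t => Real.exp t • g t)
    (h' := fun t => Real.exp t • g' t + Real.exp t • g t) hT
    (Real.continuous_exp.continuousOn.smul hcont)
    (fun t ht => (Real.hasDerivAt_exp t).smul (hderiv t ht))
    (fun t ht => by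
      rw [← smul_add, real_inner_smul_left, real_inner_smul_right, inner_add_right,
        real_inner_self_eq_norm_sq, ← mul_assoc]
      exact mul_nonpos_of_nonneg_of_nonpos (by positivity) (by linarith [hinner t ht]))
  rw [norm_smul, norm_smul, Real.exp_zero, norm_one, one_mul,
    Real.norm_of_nonneg (Real.exp_pos T).le] at key
  rw [Real.exp_neg, inv_mul_eq_div, le_div_iff₀' (Real.exp_pos T)]
  exact key

theorem forall_mem_of_continuousOn_Ici {X : Type*} [TopologicalSpace X] {Z : ℝ → X}
    {U K : Set X} (hZ : ContinuousOn Z (Ici 0)) (hU : IsOpen U) (hK : IsClosed K)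
    (hKU : K ⊆ U) (h0 : Z 0 ∈ U) (hstay : ∀ t ≥ 0, (∀ u ∈ Icc 0 t, Z u ∈ U) → Z t ∈ K) :
    ∀ t ≥ 0, Z t ∈ U := by
  by_contra! hexit
  set A := Ici 0 ∩ Z ⁻¹' Uᶜ
  have hbdd : BddBelow A := ⟨0, fun u hu => hu.1⟩
  have hT : sInf A ∈ A :=
    (hZ.preimage_isClosed_of_isClosed isClosed_Ici hU.isClosed_compl).csInf_mem hexit hbdd
  set T := sInf A
  have hbefore : ∀ u ∈ Ico 0 T, Z u ∈ U := fun u hu => by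
    by_contra hu'
    exact (csInf_le hbdd ⟨hu.1, hu'⟩).not_gt hu.2
  have hT0 : T ≠ 0 := fun h => hT.2 (h ▸ h0)
  have hcl : T ∈ closure (Ico 0 T) := by
    rw [closure_Ico hT0.symm]
    exact right_mem_Icc.2 hT.1
  have hZT : Z T ∈ K := hK.closure_eq ▸ ((hZ T hT.1).mono Ico_subset_Ici_self).mem_closure hcl
    fun u hu => hstay u hu.1 fun v hv => hbefore v ⟨hv.1, hv.2.trans_lt hu.2⟩
  exact hT.2 (hKU hZT)

theorem isLocExpStableEquilib_of_lyapunov {n m : ℕ} {F : Emm n m → G} {W : Emm n m → Emm n m}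
    {zs : Emm n m} (hW : W zs = 0) (hF : Differentiable ℝ F)
    (hup : F =O[𝓝 zs] (· - zs)) (hlow : (· - zs) =O[𝓝 zs] F)
    (hdecr : ∀ᶠ z in 𝓝 zs, ⟪F z, fderiv ℝ F z (W z)⟫ ≤ -‖F z‖ ^ 2) :
    IsLocExpStableEquilib W zs := by
  obtain ⟨b, hb, hupb⟩ := hup.exists_pos
  obtain ⟨a, ha, hlowa⟩ := hlow.exists_pos
  obtain ⟨r, hr, hball⟩ :=
    Metric.eventually_nhds_iff_ball.1 (hupb.bound.and (hlowa.bound.and hdecr))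
  refine ⟨hW, min r (r / (2 * (a * b))), a * b, 1, by positivity, by positivity, one_pos, ?_⟩
  intro Z hsol h0
  have hZ : ContinuousOn Z (Ici 0) := fun t ht => (hsol t ht).continuousWithinAt
  have hbound : ∀ t ≥ 0, (∀ u ∈ Icc 0 t, Z u ∈ ball zs r) →
      ‖Z t - zs‖ ≤ a * b * Real.exp (-1 * t) * ‖Z 0 - zs‖ := by
    intro t ht hstay
    have hdecay : ‖F (Z t)‖ ≤ Real.exp (-t) * ‖F (Z 0)‖ :=
      norm_le_exp_neg_mul_of_inner_deriv_le ht
        (hF.continuous.comp_continuousOn (hZ.mono Icc_subset_Ici_self))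
        (fun u hu => (hF (Z u)).hasFDerivAt.comp_hasDerivAt u
          ((hsol u hu.1.le).hasDerivAt (Ici_mem_nhds hu.1)))
        (fun u hu => (hball _ (hstay u (Ioo_subset_Icc_self hu))).2.2)
    calc ‖Z t - zs‖ ≤ a * ‖F (Z t)‖ := (hball _ (hstay t ⟨ht, le_rfl⟩)).2.1
      _ ≤ a * (Real.exp (-t) * (b * ‖Z 0 - zs‖)) := by
        gcongr
        exact hdecay.trans (by gcongr; exact (hball _ (hstay 0 ⟨le_rfl, ht⟩)).1)
      _ = a * b * Real.exp (-1 * t) * ‖Z 0 - zs‖ := by ring_nf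
  have hZ0 : ‖Z 0 - zs‖ < r / (2 * (a * b)) := h0.trans_le (min_le_right _ _)
  have htrap : ∀ t ≥ 0, Z t ∈ ball zs r :=
    forall_mem_of_continuousOn_Ici hZ isOpen_ball isClosed_closedBall
      (closedBall_subset_ball (half_lt_self hr))
      (mem_ball_iff_norm.2 (h0.trans_le (min_le_left _ _)))
      fun t ht hstay => mem_closedBall_iff_norm.2 <| (hbound t ht hstay).trans <| by
        have hexp : Real.exp (-1 * t) ≤ 1 := Real.exp_le_one_iff.2 (by linarith)
        calc a * b * Real.exp (-1 * t) * ‖Z 0 - zs‖ ≤ a * b * 1 * (r / (2 * (a * b))) := by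
              gcongr
          _ = r / 2 := by field_simp
  exact fun t ht => hbound t ht fun u hu => htrap u hu.1

end Lyapunov

section Asymptotics

variable {E E' : Type*} [NormedAddCommGroup E] [NormedSpace ℝ E] [NormedAddCommGroup E']
  [NormedSpace ℝ E']

theorem HasFDerivAt.isBigO_sub_rev {f : E → E'} {e : E ≃L[ℝ] E'} {x : E}
    (hf : HasFDerivAt f (e : E →L[ℝ] E') x) : (· - x) =O[𝓝 x] (f · - f x) :=
  (e.isBigO_sub_rev _ _).trans
    (IsEquivalent.isBigO_symm (hf.isLittleO.trans_isBigO (e.isBigO_sub_rev _ _)))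

theorem Filter.Tendsto.isBigO_clm_apply {α : Type*} {l : Filter α} {T : α → E →L[ℝ] E'}
    {T₀ : E →L[ℝ] E'} (hT : Tendsto T l (𝓝 T₀)) (g : α → E) :
    (fun x => T x (g x)) =O[l] g :=
  (isBoundedBilinearMap_apply (𝕜 := ℝ)).isBigO_comp.trans <| by
    simpa using ((hT.isBigO_one ℝ).norm_left.mul (isBigO_refl (fun x => ‖g x‖) l)).norm_right

theorem isLittleO_fderiv_fderiv_apply {F : E → E'} (hF : ContDiff ℝ 2 F) {x : E} (hx : F x = 0)
    {N : E → E} (hN : N =O[𝓝 x] F) :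
    (fun z => fderiv ℝ (fderiv ℝ F) z (N z) (N z)) =o[𝓝 x] F := by
  have hD2 : Continuous (fderiv ℝ (fderiv ℝ F)) :=
    (hF.fderiv_right (m := 1) (by norm_num)).continuous_fderiv (by norm_num)
  have hFo : (fun z => ‖F z‖) =o[𝓝 x] (fun _ => (1 : ℝ)) := by
    rw [isLittleO_one_iff, tendsto_zero_iff_norm_tendsto_zero]
    simpa [hx] using (hF.continuous.tendsto x).norm
  have hq : (fun z => fderiv ℝ (fderiv ℝ F) z (N z) (N z)) =O[𝓝 x] fun z => ‖F z‖ * ‖F z‖ :=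
    (isBoundedBilinearMap_apply (𝕜 := ℝ)).isBigO_comp.trans
      ((((hD2.tendsto x).isBigO_clm_apply N).trans hN).norm_norm.mul hN.norm_norm)
  simpa using (hq.trans_isLittleO (hFo.mul_isBigO (isBigO_refl _ _))).norm_right

end Asymptotics

section EuclideanMatrices

variable {ι : Type*} [Fintype ι]

theorem fderiv_euclidean_apply {X : Type*} [NormedAddCommGroup X] [NormedSpace ℝ X]
    {G : X → EuclideanSpace ℝ ι} {z : X} (hG : DifferentiableAt ℝ G z) (i : ι) (v : X) :
    fderiv ℝ (fun w => G w i) z v = fderiv ℝ G z v i := by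
  have h : (fun w => G w i) = EuclideanSpace.proj (𝕜 := ℝ) i ∘ G := rfl
  rw [h, fderiv_comp z (EuclideanSpace.proj i).differentiableAt hG, ContinuousLinearMap.fderiv]
  rfl

theorem gradient_apply_eq_fderiv_single [DecidableEq ι] (f : EuclideanSpace ℝ ι → ℝ)
    (z : EuclideanSpace ℝ ι) (k : ι) :
    gradient f z k = fderiv ℝ f z (EuclideanSpace.single k 1) := by
  rw [← toDual_gradient, InnerProductSpace.toDual_apply_apply, EuclideanSpace.inner_single_right]
  simp

variable [DecidableEq ι]

theorem Matrix.toEuclideanCLM_symm_apply (T : EuclideanSpace ℝ ι →L[ℝ] EuclideanSpace ℝ ι)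
    (i j : ι) : (toEuclideanCLM (𝕜 := ℝ)).symm T i j = T (EuclideanSpace.single j 1) i := by
  obtain ⟨M, rfl⟩ : ∃ M, toEuclideanCLM (𝕜 := ℝ) M = T := ⟨_, StarAlgEquiv.apply_symm_apply _ T⟩
  simp

theorem Matrix.continuous_toEuclideanCLM : Continuous (toEuclideanCLM (𝕜 := ℝ) (n := ι)) :=
  (toEuclideanCLM (𝕜 := ℝ) (n := ι)).toAlgEquiv.toLinearMap.continuous_of_finiteDimensional

theorem Matrix.continuous_toEuclideanCLM_symm :
    Continuous (toEuclideanCLM (𝕜 := ℝ) (n := ι)).symm :=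
  (toEuclideanCLM (𝕜 := ℝ) (n := ι)).toAlgEquiv.symm.toLinearMap.continuous_of_finiteDimensional

theorem Matrix.continuousAt_inv_of_isUnit {A : Matrix ι ι ℝ} (hA : IsUnit A) :
    ContinuousAt Inv.inv A :=
  continuousAt_matrix_inv A <| by
    rw [Ring.inverse_eq_inv']
    exact continuousAt_inv₀ ((isUnit_iff_isUnit_det A).1 hA).ne_zero

theorem of_fderiv_euclidean_apply_single {G : EuclideanSpace ℝ ι → EuclideanSpace ℝ ι}
    {z : EuclideanSpace ℝ ι} (hG : DifferentiableAt ℝ G z) :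
    Matrix.of (fun i j => fderiv ℝ (fun w => G w i) z (EuclideanSpace.single j 1)) =
      (toEuclideanCLM (𝕜 := ℝ)).symm (fderiv ℝ G z) := by
  ext i j
  simp [Matrix.toEuclideanCLM_symm_apply, fderiv_euclidean_apply hG]

end EuclideanMatrices

theorem ContDiff.gradient {E : Type*} [NormedAddCommGroup E] [InnerProductSpace ℝ E]
    [CompleteSpace E] {f : E → ℝ} {k : WithTop ℕ∞} (hf : ContDiff ℝ (k + 1) f) :
    ContDiff ℝ k (gradient f) :=
  (InnerProductSpace.toDual ℝ E).symm.toContinuousLinearEquiv.contDiff.comp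
    (hf.fderiv_right le_rfl)

variable {n m : ℕ}

section Saddle

theorem splice_add_smul_single_inl (zs : Emm n m) (i : Fin n) (t : ℝ) :
    splice (zs + t • EuclideanSpace.single (Sum.inl i) 1) zs =
      zs + t • EuclideanSpace.single (Sum.inl i) 1 := by
  ext (k | k) <;> simp [splice, toE]

theorem splice_add_smul_single_inr (zs : Emm n m) (j : Fin m) (t : ℝ) :
    splice zs (zs + t • EuclideanSpace.single (Sum.inr j) 1) =
      zs + t • EuclideanSpace.single (Sum.inr j) 1 := by
  ext (k | k) <;> simp [splice, toE]

theorem IsLocalSaddle.isLocalExtr_line {f : Emm n m → ℝ} {zs : Emm n m} (h : IsLocalSaddle f zs)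
    (k : Idx n m) : IsLocalExtr (fun t : ℝ => f (zs + t • EuclideanSpace.single k 1)) 0 := by
  obtain ⟨U, hU, hsad⟩ := h
  have hmem : ∀ᶠ t in 𝓝 (0 : ℝ), zs + t • EuclideanSpace.single k 1 ∈ U :=
    (Continuous.tendsto' (by fun_prop) 0 zs (by simp)) hU
  cases k with
  | inl i =>
    refine Or.inl (hmem.mono fun t ht => ?_)
    simpa [splice_add_smul_single_inl] using (hsad _ ht).2
  | inr j =>
    refine Or.inr (hmem.mono fun t ht => ?_)
    simpa [splice_add_smul_single_inr] using (hsad _ ht).1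

theorem IsLocalSaddle.gradient_eq_zero {f : Emm n m → ℝ} {zs : Emm n m} (h : IsLocalSaddle f zs)
    (hf : DifferentiableAt ℝ f zs) : gradient f zs = 0 := by
  ext k
  have hline : HasDerivAt (fun t : ℝ => zs + t • EuclideanSpace.single k 1)
      (EuclideanSpace.single k 1) 0 := by
    simpa using ((hasDerivAt_id (0 : ℝ)).smul_const (EuclideanSpace.single k (1 : ℝ))).const_add zs
  rw [gradient_apply_eq_fderiv_single]
  exact (h.isLocalExtr_line k).hasDerivAt_eq_zero
    ((by simpa using hf.hasFDerivAt : HasFDerivAt f _ (zs + (0 : ℝ) • _)).comp_hasDerivAt 0 hline)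

end Saddle

section SaddleOperator

def saddleSign : Idx n m → ℝ := Sum.elim (fun _ => 1) (fun _ => -1)

theorem Fvec_eq_diagonal_gradient (f : Emm n m → ℝ) :
    Fvec f = fun z => toEuclideanCLM (𝕜 := ℝ) (diagonal saddleSign) (gradient f z) := by
  funext z
  ext (k | k) <;> simp [Fvec, toE, saddleSign, mulVec_diagonal]

theorem IsLocalSaddle.Fvec_eq_zero {f : Emm n m → ℝ} {zs : Emm n m} (h : IsLocalSaddle f zs)
    (hf : DifferentiableAt ℝ f zs) : Fvec f zs = 0 := by
  simp [Fvec_eq_diagonal_gradient, h.gradient_eq_zero hf]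

theorem contDiff_Fvec {f : Emm n m → ℝ} (hf : ContDiff ℝ 3 f) : ContDiff ℝ 2 (Fvec f) := by
  rw [Fvec_eq_diagonal_gradient]
  exact (toEuclideanCLM (𝕜 := ℝ) (diagonal saddleSign)).contDiff.comp hf.gradient

theorem DFmat_eq_toEuclideanCLM_symm {f : Emm n m → ℝ} {z : Emm n m}
    (h : DifferentiableAt ℝ (Fvec f) z) :
    DFmat f z = (toEuclideanCLM (𝕜 := ℝ)).symm (fderiv ℝ (Fvec f) z) :=
  of_fderiv_euclidean_apply_single h

theorem toEuclideanCLM_DFmat {f : Emm n m → ℝ} {z : Emm n m}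
    (h : DifferentiableAt ℝ (Fvec f) z) :
    toEuclideanCLM (𝕜 := ℝ) (DFmat f z) = fderiv ℝ (Fvec f) z := by
  rw [DFmat_eq_toEuclideanCLM_symm h, StarAlgEquiv.apply_symm_apply]

theorem hessMat_eq_toEuclideanCLM_symm {f : Emm n m → ℝ} {z : Emm n m}
    (h : DifferentiableAt ℝ (gradient f) z) :
    hessMat f z = (toEuclideanCLM (𝕜 := ℝ)).symm (fderiv ℝ (gradient f) z) :=
  of_fderiv_euclidean_apply_single h

theorem D2Fmat_eq_toEuclideanCLM_symm {f : Emm n m → ℝ} {z : Emm n m}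
    (h : Differentiable ℝ (Fvec f)) (h2 : DifferentiableAt ℝ (fderiv ℝ (Fvec f)) z)
    (v : Emm n m) :
    D2Fmat f z v = (toEuclideanCLM (𝕜 := ℝ)).symm (fderiv ℝ (fderiv ℝ (Fvec f)) z v) := by
  ext i j
  have hDF : (fun w => DFmat f w i j) =
      fun w => fderiv ℝ (Fvec f) w (EuclideanSpace.single j 1) i := by
    funext w
    rw [DFmat_eq_toEuclideanCLM_symm (h w), Matrix.toEuclideanCLM_symm_apply]
  rw [D2Fmat, Matrix.of_apply, hDF,
    fderiv_euclidean_apply (h2.clm_apply (differentiableAt_const _)),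
    fderiv_clm_apply h2 (differentiableAt_const _), Matrix.toEuclideanCLM_symm_apply]
  simp

theorem DFmat_eq_diagonal_mul_hessMat {f : Emm n m → ℝ} (hf : ContDiff ℝ 3 f) (z : Emm n m) :
    DFmat f z = diagonal saddleSign * hessMat f z := by
  have hg : Differentiable ℝ (gradient f) := (hf.gradient (k := 2)).differentiable (by norm_num)
  rw [DFmat_eq_toEuclideanCLM_symm ((contDiff_Fvec hf).differentiable (by norm_num) z),
    hessMat_eq_toEuclideanCLM_symm (hg z), Fvec_eq_diagonal_gradient,
    fderiv_fun_comp z (toEuclideanCLM (𝕜 := ℝ) (diagonal saddleSign)).differentiableAt (hg z),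
    ContinuousLinearMap.fderiv, ← ContinuousLinearMap.mul_def, map_mul,
    StarAlgEquiv.symm_apply_apply]

theorem isUnit_DFmat {f : Emm n m → ℝ} (hf : ContDiff ℝ 3 f) {z : Emm n m}
    (hH : IsUnit (hessMat f z)) : IsUnit (DFmat f z) := by
  rw [DFmat_eq_diagonal_mul_hessMat hf]
  refine IsUnit.mul (Matrix.isUnit_diagonal.2 (Pi.isUnit_iff.2 fun k => ?_)) hH
  cases k <;> simp [saddleSign]

theorem fderiv_Fvec_toEuclideanCLM {f : Emm n m → ℝ} {z : Emm n m}
    (h : DifferentiableAt ℝ (Fvec f) z) (M : Matrix (Idx n m) (Idx n m) ℝ) (v : Emm n m) :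
    fderiv ℝ (Fvec f) z (toEuclideanCLM (𝕜 := ℝ) M v) =
      toEuclideanCLM (𝕜 := ℝ) (DFmat f z * M) v := by
  rw [map_mul, toEuclideanCLM_DFmat h, mul_apply_eq_comp]

theorem isLocExpStableEquilib_of_inner_fderiv_Fvec_le {f : Emm n m → ℝ} (hf : ContDiff ℝ 3 f)
    {zs : Emm n m} (hH : IsUnit (hessMat f zs)) (hzs : IsLocalSaddle f zs)
    {W : Emm n m → Emm n m} (hW : W zs = 0)
    (hdecr : ∀ᶠ z in 𝓝 zs, ⟪Fvec f z, fderiv ℝ (Fvec f) z (W z)⟫ ≤ -‖Fvec f z‖ ^ 2) :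
    IsLocExpStableEquilib W zs := by
  have hF : Differentiable ℝ (Fvec f) := (contDiff_Fvec hf).differentiable (by norm_num)
  have hFzs : Fvec f zs = 0 := hzs.Fvec_eq_zero (hf.differentiable (by norm_num) zs)
  obtain ⟨u, hu⟩ : IsUnit (fderiv ℝ (Fvec f) zs) :=
    toEuclideanCLM_DFmat (hF zs) ▸ (isUnit_DFmat hf hH).map _
  have he : HasFDerivAt (Fvec f)
      (ContinuousLinearEquiv.unitsEquiv ℝ _ u : Emm n m →L[ℝ] Emm n m) zs := by
    convert (hF zs).hasFDerivAt
    ext1 v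
    exact (ContinuousLinearEquiv.unitsEquiv_apply ℝ _ u v).trans (by rw [hu])
  refine isLocExpStableEquilib_of_lyapunov hW hF ?_ ?_ hdecr
  · simpa [hFzs] using (hF zs).isBigO_sub
  · simpa [hFzs] using he.isBigO_sub_rev

end SaddleOperator

section DampedNewton

/-- `toE ((DFmat f z)⁻¹ *ᵥ ofE (Fvec f z))`; the two forms agree definitionally. -/
def newtonDirection (f : Emm n m → ℝ) (z : Emm n m) : Emm n m :=
  toEuclideanCLM (𝕜 := ℝ) (DFmat f z)⁻¹ (Fvec f z)

theorem fderiv_Fvec_newtonDirection {f : Emm n m → ℝ} {z : Emm n m}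
    (h : DifferentiableAt ℝ (Fvec f) z) (hA : IsUnit (DFmat f z)) :
    fderiv ℝ (Fvec f) z (newtonDirection f z) = Fvec f z := by
  rw [newtonDirection, fderiv_Fvec_toEuclideanCLM h,
    mul_nonsing_inv _ ((isUnit_iff_isUnit_det _).1 hA), map_one, one_apply_eq_self]

theorem newtonDirection_isBigO {f : Emm n m → ℝ} (hf : ContDiff ℝ 3 f) {zs : Emm n m}
    (hH : IsUnit (hessMat f zs)) : newtonDirection f =O[𝓝 zs] Fvec f := by
  have hF := contDiff_Fvec hf
  have hDF : Continuous (DFmat f) := by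
    rw [show DFmat f = fun z => (toEuclideanCLM (𝕜 := ℝ)).symm (fderiv ℝ (Fvec f) z) from
      funext fun z => DFmat_eq_toEuclideanCLM_symm (hF.differentiable (by norm_num) z)]
    exact Matrix.continuous_toEuclideanCLM_symm.comp (hF.continuous_fderiv (by norm_num))
  have hT : ContinuousAt (fun z => toEuclideanCLM (𝕜 := ℝ) (DFmat f z)⁻¹) zs :=
    Matrix.continuous_toEuclideanCLM.continuousAt.comp
      ((Matrix.continuousAt_inv_of_isUnit (isUnit_DFmat hf hH)).comp hDF.continuousAt)
  exact hT.tendsto.isBigO_clm_apply (Fvec f)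

theorem isLocExpStableEquilib_neg_newtonDirection {f : Emm n m → ℝ} (hf : ContDiff ℝ 3 f)
    (hH : ∀ z, IsUnit (hessMat f z)) {zs : Emm n m} (hzs : IsLocalSaddle f zs) :
    IsLocExpStableEquilib (fun z => -newtonDirection f z) zs := by
  have hF : Differentiable ℝ (Fvec f) := (contDiff_Fvec hf).differentiable (by norm_num)
  refine isLocExpStableEquilib_of_inner_fderiv_Fvec_le hf (hH zs) hzs ?_ (.of_forall fun z => ?_)
  · simp [newtonDirection, hzs.Fvec_eq_zero (hf.differentiable (by norm_num) zs)]
  · rw [map_neg, fderiv_Fvec_newtonDirection (hF z) (isUnit_DFmat hf (hH z)), inner_neg_right,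
      real_inner_self_eq_norm_sq]

theorem isLocExpStableEquilib_neg_newtonDirection_add_smul {f : Emm n m → ℝ}
    (hf : ContDiff ℝ 3 f) (hH : ∀ z, IsUnit (hessMat f z)) {zs : Emm n m}
    (hzs : IsLocalSaddle f zs) {s : ℝ} (hs : 0 ≤ s) :
    IsLocExpStableEquilib (fun z => -newtonDirection f z + (s / 2) • toEuclideanCLM (𝕜 := ℝ)
      ((DFmat f z)⁻¹ * D2Fmat f z (newtonDirection f z) - 1) (newtonDirection f z)) zs := by
  have hF2 := contDiff_Fvec hf
  have hF : Differentiable ℝ (Fvec f) := hF2.differentiable (by norm_num)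
  have hDF : Differentiable ℝ (fderiv ℝ (Fvec f)) :=
    (hF2.fderiv_right (m := 1) (by norm_num)).differentiable (by norm_num)
  have hFzs := hzs.Fvec_eq_zero (hf.differentiable (by norm_num) zs)
  have hsmall : ∀ᶠ z in 𝓝 zs, ‖fderiv ℝ (fderiv ℝ (Fvec f)) z (newtonDirection f z)
      (newtonDirection f z)‖ ≤ 1 * ‖Fvec f z‖ :=
    (isLittleO_fderiv_fderiv_apply hF2 hFzs (newtonDirection_isBigO hf (hH zs))).def one_pos
  refine isLocExpStableEquilib_of_inner_fderiv_Fvec_le hf (hH zs) hzs ?_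
    (hsmall.mono fun z hz => ?_)
  · simp [newtonDirection, hFzs]
  set N := newtonDirection f z
  set q := fderiv ℝ (fderiv ℝ (Fvec f)) z N N
  have hN := fderiv_Fvec_newtonDirection (hF z) (isUnit_DFmat hf (hH z))
  have hderiv : fderiv ℝ (Fvec f) z (-N + (s / 2) • toEuclideanCLM (𝕜 := ℝ)
      ((DFmat f z)⁻¹ * D2Fmat f z N - 1) N) = -Fvec f z + (s / 2) • (q - Fvec f z) := by
    rw [map_add, map_neg, map_smul, hN, fderiv_Fvec_toEuclideanCLM (hF z), mul_sub,
      ← mul_assoc, mul_nonsing_inv _ ((isUnit_iff_isUnit_det _).1 (isUnit_DFmat hf (hH z))),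
      one_mul, mul_one, map_sub, _root_.sub_apply,
      D2Fmat_eq_toEuclideanCLM_symm hF (hDF z), StarAlgEquiv.apply_symm_apply,
      toEuclideanCLM_DFmat (hF z), hN]
  have hq : ⟪Fvec f z, q⟫ ≤ ‖Fvec f z‖ ^ 2 := by
    calc ⟪Fvec f z, q⟫ ≤ ‖Fvec f z‖ * ‖q‖ := real_inner_le_norm _ _
      _ ≤ ‖Fvec f z‖ * ‖Fvec f z‖ := by gcongr; simpa using hz
      _ = ‖Fvec f z‖ ^ 2 := by ring
  rw [hderiv, inner_add_right, inner_neg_right, real_inner_smul_right, inner_sub_right,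
    real_inner_self_eq_norm_sq]
  nlinarith

end DampedNewton

theorem stmt14_general {n m : ℕ} (f : Emm n m → ℝ) (L : ℝ)
    (hf : ContDiff ℝ 3 f) (hB : AssumptionB f L)
    (zs : Emm n m) (hzs : IsLocalSaddle f zs) :
    IsLocExpStableEquilib (fun z => -toE ((DFmat f z)⁻¹ *ᵥ ofE (Fvec f z))) zs ∧
    ∀ s > (0:ℝ),
      IsLocExpStableEquilib
        (fun z =>
          -toE ((DFmat f z)⁻¹ *ᵥ ofE (Fvec f z)) +
            (s / 2) • toE
              (((DFmat f z)⁻¹ * D2Fmat f z (toE ((DFmat f z)⁻¹ *ᵥ ofE (Fvec f z))) -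
                  (1 : Matrix (Idx n m) (Idx n m) ℝ)) *ᵥ
                ((DFmat f z)⁻¹ *ᵥ ofE (Fvec f z)))) zs :=
  ⟨isLocExpStableEquilib_neg_newtonDirection hf hB.1 hzs,
    fun _ hs => isLocExpStableEquilib_neg_newtonDirection_add_smul hf hB.1 hzs hs.le⟩

/-- Saddle points are exponentially stable equilibria of both the `O(1)`- and the
`O(s)`-resolution ODEs of the Damped Newton method. -/
theorem stmt14 {n m : ℕ} (f : Emm n m → ℝ) (L : ℝ)
    (hf : ContDiff ℝ 3 f) (hL : 0 < L) (hB : AssumptionB f L)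
    (zs : Emm n m) (hzs : IsLocalSaddle f zs) :
    IsLocExpStableEquilib (fun z => -toE ((DFmat f z)⁻¹ *ᵥ ofE (Fvec f z))) zs ∧
    ∀ s > (0:ℝ),
      IsLocExpStableEquilib
        (fun z =>
          -toE ((DFmat f z)⁻¹ *ᵥ ofE (Fvec f z)) +
            (s / 2) • toE
              (((DFmat f z)⁻¹ * D2Fmat f z (toE ((DFmat f z)⁻¹ *ᵥ ofE (Fvec f z))) -
                  (1 : Matrix (Idx n m) (Idx n m) ℝ)) *ᵥ
                ((DFmat f z)⁻¹ *ᵥ ofE (Fvec f z)))) zs :=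
  stmt14_general f L hf hB zs hzs
end
end
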